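/- arXiv:2401.10601 — 3 statements merged into one kernel-verified Lean document; each statement's English description precedes it below -/
import Mathlib

section
/- For fixed slot set S, the function H ↦ Φ(S, H) is submodular in H: for all H ⊆ H' ⊆ T and c ∉ H', Φ(S, H ∪ {c}) - Φ(S, H) ≥ Φ(S, H' ∪ {c}) - Φ(S, H'). -/
namespace Finset

variable {ι R : Type*} [DecidableEq ι] [CommRing R] {f : ι → R} {s t : Finset ι} {a : ι}

lemma prod_sub_prod_insert (ha : a ∉ s) :
    ∏ i ∈ s, f i - ∏ i ∈ insert a s, f i = (∏ i ∈ s, f i) * (1 - f a) := by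
  rw [prod_insert ha]
  ring

lemma prod_sub_prod_insert_le_of_subset [PartialOrder R] [IsOrderedRing R]
    (hf₀ : ∀ i, 0 ≤ f i) (hf₁ : ∀ i, f i ≤ 1) (hst : s ⊆ t) (ha : a ∉ t) :
    ∏ i ∈ t, f i - ∏ i ∈ insert a t, f i ≤ ∏ i ∈ s, f i - ∏ i ∈ insert a s, f i := by
  rw [prod_sub_prod_insert ha, prod_sub_prod_insert fun h ↦ ha (hst h)]
  exact mul_le_mul_of_nonneg_right (prod_anti_set_of_le_one hf₀ hf₁ hst) (sub_nonneg.2 (hf₁ a))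

end Finset

theorem Phi_submodular_in_tags
    {B T U : Type*} [DecidableEq T] [Fintype U] (q : U → B → T → ℝ)
    (hq : ∀ u b c, 0 ≤ q u b c ∧ q u b c ≤ 1)
    (Φ : Finset B → Finset T → ℝ)
    (hΦ : ∀ (S : Finset B) (H : Finset T),
      Φ S H = ∑ u : U, (1 - ∏ b ∈ S, ∏ c ∈ H, (1 - q u b c))) :
    ∀ (S : Finset B) (H H' : Finset T), H ⊆ H' → ∀ c : T, c ∉ H' →
      Φ S (insert c H') - Φ S H' ≤ Φ S (insert c H) - Φ S H := by
  intro S H H' hHH' c hc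
  simp only [hΦ, ← Finset.sum_sub_distrib, sub_sub_sub_cancel_left]
  refine Finset.sum_le_sum fun u _ ↦ ?_
  -- swapping the products makes user `u`'s term `1 - ∏ c ∈ H, g c` with `g c ∈ [0, 1]`
  simp only [Finset.prod_comm (s := S)]
  have hmiss₀ (b : B) (c : T) : 0 ≤ 1 - q u b c := sub_nonneg.2 (hq u b c).2
  have hmiss₁ (b : B) (c : T) : 1 - q u b c ≤ 1 := sub_le_self _ (hq u b c).1
  exact Finset.prod_sub_prod_insert_le_of_subset
    (fun c ↦ Finset.prod_nonneg fun b _ ↦ hmiss₀ b c)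
    (fun c ↦ Finset.prod_le_one (fun b _ ↦ hmiss₀ b c) fun b _ ↦ hmiss₁ b c) hHH' hc
end

section
/- If f : Finset B → ℝ is monotone submodular with f(∅) = 0, and a sequence S₀ = ∅, S_{i+1} = S_i ∪ {s_{i+1}} satisfies the per-step inequality f(S_{i+1}) - f(S_i) ≥ (1/k)(f(OPT) - f(S_i)) for all 0 ≤ i < k, then f(S_k) ≥ (1 - (1 - 1/k)^k) · f(OPT). -/
/-! The gap `f OPT - f (S i)` shrinks by the factor `1 - 1/k` at every step, so after `k` steps
it is at most `(1 - 1/k) ^ k * f OPT`. -/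

theorem one_sub_pow_mul_le_of_forall_sub_ge {u : ℕ → ℝ} {c M : ℝ} (hc : c ≤ 1) (hu0 : u 0 = 0)
    (n : ℕ) (hgain : ∀ i < n, u (i + 1) - u i ≥ c * (M - u i)) :
    (1 - (1 - c) ^ n) * M ≤ u n := by
  have hgap : M - u n ≤ (1 - c) ^ n * (M - u 0) :=
    le_geom (u := fun i => M - u i) (sub_nonneg.mpr hc) n fun i hi => by
      have := hgain i hi
      linarith
  rw [hu0] at hgap
  linarith

theorem greedy_guarantee_general
    {B : Type*} (f : Finset B → ℝ)
    (hempty : f ∅ = 0)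
    (k : ℕ) (OPT : Finset B)
    (S : ℕ → Finset B)
    (hS0 : S 0 = ∅)
    (hgain : ∀ i, i < k →
      f (S (i + 1)) - f (S i) ≥ (1 / (k : ℝ)) * (f OPT - f (S i))) :
    f (S k) ≥ (1 - (1 - 1 / (k : ℝ)) ^ k) * f OPT :=
  one_sub_pow_mul_le_of_forall_sub_ge (u := fun i => f (S i)) (by simpa using Nat.cast_inv_le_one k)
    (by simp [hS0, hempty]) k hgain

theorem greedy_guarantee
    {B : Type*} [DecidableEq B] (f : Finset B → ℝ)
    (hmono : ∀ S T : Finset B, S ⊆ T → f S ≤ f T)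
    (hsub : ∀ S T : Finset B, S ⊆ T → ∀ b : B, b ∉ T →
      f (insert b T) - f T ≤ f (insert b S) - f S)
    (hempty : f ∅ = 0)
    (k : ℕ) (hk : 0 < k) (OPT : Finset B) (hOPT : 0 ≤ f OPT)
    (S : ℕ → Finset B) (s : ℕ → B)
    (hS0 : S 0 = ∅)
    (hstep : ∀ i, i < k → S (i + 1) = insert (s (i + 1)) (S i))
    (hgain : ∀ i, i < k →
      f (S (i + 1)) - f (S i) ≥ (1 / (k : ℝ)) * (f OPT - f (S i))) :
    f (S k) ≥ (1 - (1 - 1 / (k : ℝ)) ^ k) * f OPT :=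
  greedy_guarantee_general f hempty k OPT S hS0 hgain
end

section
/- Stochastic greedy sampling lemma: let f be monotone submodular, S a current solution, OPT a set of size k with OPT ⊄ S, and let R be a uniformly random subset of B \ S of size r = ⌈(|B|/k) · ln(1/ε)⌉ (with r ≤ |B \ S|). Then the probability that R ∩ (OPT \ S) = ∅ is at most (1 - |OPT \ S|/|B \ S|)^r ≤ e^{-r·|OPT\S|/|B\S|}. -/
/-!
An `r`-subset of `U` misses `M ⊆ U` exactly when it is an `r`-subset of `U \ M`, so the miss
probability is `C(n - m, r) / C(n, r)` with `n = |U|`, `m = |M|`. This ratio is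
`∏_{i < r} (n - m - i) / (n - i)`, and each factor is at most `(n - m) / n = 1 - m / n`;
the exponential bound is `1 - x ≤ e^{-x}`.
-/

open Finset

namespace Nat

theorem descFactorial_mul_pow_le_pow_mul_descFactorial {a n : ℕ} (h : a ≤ n) (r : ℕ) :
    a.descFactorial r * n ^ r ≤ a ^ r * n.descFactorial r := by
  have hpow (c : ℕ) : c ^ r = ∏ _i ∈ range r, c := by simp
  rw [descFactorial_eq_prod_range, descFactorial_eq_prod_range, hpow, hpow,
    ← prod_mul_distrib, ← prod_mul_distrib]
  refine prod_le_prod' fun i _ => ?_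
  rw [Nat.sub_mul, Nat.mul_sub, mul_comm i n]
  exact Nat.sub_le_sub_left (Nat.mul_le_mul_right i h) _

theorem choose_mul_pow_le_pow_mul_choose {a n : ℕ} (h : a ≤ n) (r : ℕ) :
    a.choose r * n ^ r ≤ a ^ r * n.choose r := by
  have := descFactorial_mul_pow_le_pow_mul_descFactorial h r
  rw [descFactorial_eq_factorial_mul_choose, descFactorial_eq_factorial_mul_choose,
    mul_assoc, mul_left_comm (a ^ r)] at this
  exact Nat.le_of_mul_le_mul_left this r.factorial_pos

theorem cast_choose_sub_div_cast_choose_le {m n : ℕ} (h : m ≤ n) (r : ℕ) :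
    ((n - m).choose r : ℝ) / n.choose r ≤ (1 - m / n) ^ r := by
  rcases n.eq_zero_or_pos with rfl | hn
  · obtain rfl : m = 0 := Nat.le_zero.mp h
    simpa using div_self_le_one ((choose 0 r : ℕ) : ℝ)
  rcases (n.choose r).eq_zero_or_pos with hC | hC
  · rw [hC, Nat.cast_zero, div_zero]
    exact pow_nonneg (sub_nonneg.mpr (div_le_one_of_le₀ (by exact_mod_cast h) n.cast_nonneg)) r
  have hfrac : (1 - m / n : ℝ) = ((n - m : ℕ) : ℝ) / n := by
    rw [Nat.cast_sub h]
    field_simp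
  rw [hfrac, div_pow, div_le_div_iff₀ (by exact_mod_cast hC) (by positivity)]
  exact_mod_cast choose_mul_pow_le_pow_mul_choose (Nat.sub_le n m) r

end Nat

theorem Finset.filter_inter_eq_empty_powersetCard {α : Type*} [DecidableEq α]
    (s t : Finset α) (n : ℕ) :
    (t.powersetCard n).filter (fun R => R ∩ s = ∅) = (t \ s).powersetCard n := by
  ext R
  simp only [mem_filter, mem_powersetCard, subset_sdiff, ← disjoint_iff_inter_eq_empty]
  tauto

theorem Real.one_sub_pow_le_exp_neg_mul {x : ℝ} (hx : x ≤ 1) (r : ℕ) :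
    (1 - x) ^ r ≤ Real.exp (-(r * x)) := by
  rw [← mul_neg, Real.exp_nat_mul]
  exact pow_le_pow_left₀ (sub_nonneg.mpr hx) (Real.one_sub_le_exp_neg x) r

theorem stochastic_sampling_miss_probability_general
    {B : Type*} [Fintype B] [DecidableEq B]
    (S OPT : Finset B)
    (r : ℕ) :
    (((((Finset.univ : Finset B) \ S).powersetCard r).filter
        (fun R => R ∩ (OPT \ S) = ∅)).card : ℝ) /
      (((((Finset.univ : Finset B) \ S)).powersetCard r).card : ℝ)
      ≤ (1 - ((OPT \ S).card : ℝ) / (((Finset.univ : Finset B) \ S).card : ℝ)) ^ r ∧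
    (1 - ((OPT \ S).card : ℝ) / (((Finset.univ : Finset B) \ S).card : ℝ)) ^ r
      ≤ Real.exp (-(r : ℝ) * ((OPT \ S).card : ℝ) /
          (((Finset.univ : Finset B) \ S).card : ℝ)) := by
  have hsub : OPT \ S ⊆ univ \ S := sdiff_subset_sdiff (subset_univ OPT) le_rfl
  have hcard := card_le_card hsub
  refine ⟨?_, ?_⟩
  · rw [filter_inter_eq_empty_powersetCard, card_powersetCard, card_powersetCard,
      card_sdiff_of_subset hsub]
    exact Nat.cast_choose_sub_div_cast_choose_le hcard r
  · rw [neg_mul, neg_div, mul_div_assoc]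
    exact Real.one_sub_pow_le_exp_neg_mul (div_le_one_of_le₀ (by exact_mod_cast hcard)
      (Nat.cast_nonneg _)) r

theorem stochastic_sampling_miss_probability
    {B : Type*} [Fintype B] [DecidableEq B]
    (f : Finset B → ℝ)
    (hmono : ∀ S T : Finset B, S ⊆ T → f S ≤ f T)
    (hsub : ∀ S T : Finset B, S ⊆ T → ∀ x : B, x ∉ T →
      f (insert x T) - f T ≤ f (insert x S) - f S)
    (k : ℕ) (hk : 1 ≤ k) (ε : ℝ) (hε : 0 < ε ∧ ε < 1)
    (S OPT : Finset B) (hcard : OPT.card = k) (hnotsub : ¬ OPT ⊆ S)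
    (r : ℕ)
    (hr : r = ⌈((Fintype.card B : ℝ) / (k : ℝ)) * Real.log (1 / ε)⌉₊)
    (hrle : r ≤ ((Finset.univ : Finset B) \ S).card) :
    (((((Finset.univ : Finset B) \ S).powersetCard r).filter
        (fun R => R ∩ (OPT \ S) = ∅)).card : ℝ) /
      (((((Finset.univ : Finset B) \ S)).powersetCard r).card : ℝ)
      ≤ (1 - ((OPT \ S).card : ℝ) / (((Finset.univ : Finset B) \ S).card : ℝ)) ^ r ∧
    (1 - ((OPT \ S).card : ℝ) / (((Finset.univ : Finset B) \ S).card : ℝ)) ^ r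
      ≤ Real.exp (-(r : ℝ) * ((OPT \ S).card : ℝ) /
          (((Finset.univ : Finset B) \ S).card : ℝ)) :=
  stochastic_sampling_miss_probability_general S OPT r
end
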